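/- arXiv:math/0411406 — 4 statements merged into one kernel-verified Lean document; each statement's English description precedes it below -/
import Mathlib

section
/- Let R be an associative unital ring with elements t, s satisfying t*s - s*t = s^2. Then for every natural number n, t^n * s = ∑_{i=0}^{n} (n!/(n-i)!) * s^(i+1) * t^(n-i). -/
/-!
Left multiplication by `t` is the sum of the two commuting operators `ad t = ⁅t, ·⁆` and right
multiplication by `t`, so the binomial theorem gives
`t ^ n * s = ∑ i, (n choose i) • (ad t) ^ i (s) * t ^ (n - i)`.
Since `ad t` is a derivation with `ad t (s) = s ^ 2`, it acts on powers of `s` as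
`s ^ k ↦ k • s ^ (k + 1)`, hence `(ad t) ^ i (s) = i! • s ^ (i + 1)`, and
`(n choose i) * i! = n! / (n - i)!`.
-/

open Finset

section

variable {A : Type*} [Ring A]

theorem pow_mul_eq_sum_iterate_lie (a x : A) (n : ℕ) :
    a ^ n * x = ∑ i ∈ range (n + 1), n.choose i • ((fun y => ⁅a, y⁆)^[i] x * a ^ (n - i)) := by
  set L := LinearMap.mulLeft ℤ a
  set R := LinearMap.mulRight ℤ a
  have hcomm : Commute (L - R) R := (LinearMap.commute_mulLeft_right a a).sub_left (.refl _)
  have hmul : a ^ n * x = ((L - R + R) ^ n) x := by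
    rw [sub_add_cancel, LinearMap.pow_mulLeft]; rfl
  rw [hmul, hcomm.add_pow, LinearMap.sum_apply]
  refine sum_congr rfl fun i _ => ?_
  rw [(hcomm.pow_pow _ _).eq, Module.End.mul_apply, Module.End.natCast_apply, map_nsmul,
    Module.End.mul_apply, LinearMap.pow_mulRight, Module.End.pow_apply]
  rfl

theorem lie_pow_of_lie_eq_sq {t s : A} (h : ⁅t, s⁆ = s ^ 2) (k : ℕ) :
    ⁅t, s ^ k⁆ = k • s ^ (k + 1) := by
  induction k with
  | zero => simp [Ring.lie_def]
  | succ k ih =>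
    have leibniz : ⁅t, s ^ (k + 1)⁆ = ⁅t, s ^ k⁆ * s + s ^ k * ⁅t, s⁆ := by
      simp only [Ring.lie_def, pow_succ]; noncomm_ring
    rw [leibniz, ih, h, smul_mul_assoc, ← pow_succ, ← pow_add, succ_nsmul]

theorem iterate_lie_of_lie_eq_sq {t s : A} (h : ⁅t, s⁆ = s ^ 2) (i : ℕ) :
    (fun y => ⁅t, y⁆)^[i] s = i.factorial • s ^ (i + 1) := by
  induction i with
  | zero => simp
  | succ i ih =>
    rw [Function.iterate_succ_apply', ih, Ring.lie_def, mul_smul_comm, smul_mul_assoc, ← smul_sub,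
      ← Ring.lie_def, lie_pow_of_lie_eq_sq h, smul_smul, Nat.factorial_succ, mul_comm]

end

theorem pow_mul_comm_expansion (R : Type*) [Ring R] (t s : R)
    (h : t * s - s * t = s ^ 2) (n : ℕ) :
    t ^ n * s =
      ∑ i ∈ Finset.range (n + 1),
        ((Nat.factorial n / Nat.factorial (n - i) : ℕ) : R) * s ^ (i + 1) * t ^ (n - i) := by
  rw [← Ring.lie_def] at h
  rw [pow_mul_eq_sum_iterate_lie]
  refine sum_congr rfl fun i hi => ?_
  rw [iterate_lie_of_lie_eq_sq h, ← Nat.descFactorial_eq_div (mem_range_succ_iff.mp hi),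
    Nat.descFactorial_eq_factorial_mul_choose, smul_mul_assoc, smul_smul, nsmul_eq_mul,
    mul_assoc, mul_comm i.factorial]
end

section
/- Let M be a module over ℚ (i.e. a torsion-free abelian group that is uniquely divisible, or more simply a ℚ-vector space) equipped with two additive endomorphisms t and s satisfying t∘s - s∘t = s∘s. Suppose t^p M = 0 for a positive integer p. If m ∈ M satisfies t^q m = 0 for some positive integer q, then s^(p+q) m = 0. -/
open Finset

private lemma lemA {M : Type*} [AddCommGroup M]
    (t s : AddMonoid.End M) (h : t * s - s * t = s * s) :
    ∀ n : ℕ, t * s ^ n = s ^ n * t + n • s ^ (n + 1) := by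
  have hts : t * s = s * t + s * s := by rw [← h]; abel
  intro n
  induction n with
  | zero => simp
  | succ n ih =>
    rw [pow_succ, ← mul_assoc, ih, add_mul, smul_mul_assoc, mul_assoc, hts]
    rw [mul_add, ← mul_assoc, ← mul_assoc, ← pow_succ, ← pow_succ]
    rw [succ_nsmul]
    abel

private lemma lemB {M : Type*} [AddCommGroup M]
    (t s : AddMonoid.End M) (h : t * s - s * t = s * s) :
    ∀ (j k : ℕ), t ^ j * s ^ k =
      ∑ i ∈ range (j + 1),
        (Nat.choose j i * ∏ r ∈ range i, (k + r)) • (s ^ (k + i) * t ^ (j - i)) := by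
  intro j
  induction j with
  | zero => intro k; simp
  | succ j ih =>
    intro k
    have hL : t ^ (j + 1) * s ^ k
        = (∑ i ∈ range (j + 1),
            (Nat.choose j i * ∏ r ∈ range i, (k + r)) • (s ^ (k + i) * t ^ (j - i + 1)))
        + ∑ i ∈ range (j + 1),
            ((Nat.choose j i * ∏ r ∈ range i, (k + r)) * (k + i)) •
              (s ^ (k + i + 1) * t ^ (j - i)) := by
      rw [pow_succ', mul_assoc, ih, Finset.mul_sum, ← Finset.sum_add_distrib]
      refine Finset.sum_congr rfl fun i _ => ?_
      rw [mul_smul_comm, ← mul_assoc, lemA t s h (k + i), add_mul, smul_mul_assoc,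
        mul_assoc, ← pow_succ', nsmul_add, smul_smul]
    rw [hL]
    rw [Finset.sum_range_succ' (fun i =>
      (Nat.choose (j + 1) i * ∏ r ∈ range i, (k + r)) • (s ^ (k + i) * t ^ (j + 1 - i)))]
    simp only [Nat.choose_succ_succ, Nat.succ_eq_add_one, add_mul, add_smul,
      Finset.sum_add_distrib]
    have e1 : ∀ i ∈ range (j + 1),
        (Nat.choose j i * ∏ r ∈ range (i + 1), (k + r)) •
            (s ^ (k + (i + 1)) * t ^ (j + 1 - (i + 1)))
        = ((Nat.choose j i * ∏ r ∈ range i, (k + r)) * (k + i)) •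
            (s ^ (k + i + 1) * t ^ (j - i)) := by
      intro i _
      have hnn : j + 1 - (i + 1) = j - i := by omega
      rw [Finset.prod_range_succ, ← mul_assoc, hnn, ← add_assoc]
    rw [Finset.sum_congr rfl e1]
    have e2 : (∑ i ∈ range (j + 1),
          (Nat.choose j (i + 1) * ∏ r ∈ range (i + 1), (k + r)) •
            (s ^ (k + (i + 1)) * t ^ (j + 1 - (i + 1))))
        + (Nat.choose j 0 * ∏ r ∈ range 0, (k + r)) • (s ^ (k + 0) * t ^ (j + 1 - 0))
        = ∑ i ∈ range (j + 1),
            (Nat.choose j i * ∏ r ∈ range i, (k + r)) • (s ^ (k + i) * t ^ (j - i + 1)) := by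
      rw [← Finset.sum_range_succ' (fun i =>
        (Nat.choose j i * ∏ r ∈ range i, (k + r)) • (s ^ (k + i) * t ^ (j + 1 - i))) (j + 1)]
      rw [Finset.sum_range_succ]
      simp only [Nat.choose_succ_self, zero_mul, zero_smul, add_zero]
      refine Finset.sum_congr rfl fun i hi => ?_
      have : j + 1 - i = j - i + 1 := by
        have := Finset.mem_range.mp hi; omega
      rw [this]
    rw [← e2]
    have f0 : (Nat.choose j 0 * ∏ r ∈ range 0, (k + r)) • (s ^ (k + 0) * t ^ (j + 1 - 0))
        = (Nat.choose (j + 1) 0 * ∏ r ∈ range 0, (k + r)) • (s ^ (k + 0) * t ^ (j + 1 - 0)) := by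
      norm_num
    rw [f0]
    abel

theorem torsion_annihilated (M : Type*) [AddCommGroup M] [Module ℚ M]
    (t s : AddMonoid.End M) (h : t * s - s * t = s * s)
    (p : ℕ) (hp : 0 < p) (htp : ∀ m : M, (t ^ p) m = 0)
    (q : ℕ) (hq : 0 < q) (m : M) (hm : (t ^ q) m = 0) :
    (s ^ (p + q)) m = 0 := by
  have hpow : ∀ (a b : ℕ) (x : M), (t ^ (a + b)) x = (t ^ a) ((t ^ b) x) := by
    intro a b x; rw [pow_add]; rfl
  have claim : ∀ d, d ≤ q → ∀ n, p + d ≤ n → (s ^ n) ((t ^ (q - d)) m) = 0 := by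
    intro d
    induction d using Nat.strong_induction_on with
    | _ d ih =>
      intro hdq n hn
      rcases Nat.eq_zero_or_pos d with rfl | hd
      · rw [Nat.sub_zero, hm, map_zero]
      · set k := n - p with hk
        have hkp : k + p = n := by omega
        have hkd : d ≤ k := by omega
        set j := q - d with hj
        have key := DFunLike.congr_fun (lemB t s h p k) ((t ^ j) m)
        erw [AddMonoidHom.finset_sum_apply] at key
        have hL0 : (t ^ p * s ^ k) ((t ^ j) m) = 0 := htp _
        rw [hL0] at key
        have key2 : (0 : M) = ∑ i ∈ range (p + 1),
            (Nat.choose p i * ∏ r ∈ range i, (k + r)) •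
              ((s ^ (k + i)) ((t ^ (p - i)) ((t ^ j) m))) := by
          rw [key]
          exact Finset.sum_congr rfl fun i _ => AddMonoidHom.nsmul_apply _ _ _
        rw [Finset.sum_range_succ] at key2
        have hz : ∀ i ∈ range p,
            (Nat.choose p i * ∏ r ∈ range i, (k + r)) •
              ((s ^ (k + i)) ((t ^ (p - i)) ((t ^ j) m))) = 0 := by
          intro i hi
          have hip : i < p := Finset.mem_range.mp hi
          by_cases hcase : q ≤ p - i + j
          · have hzero : (t ^ (p - i)) ((t ^ j) m) = 0 := by
              rw [← hpow, show p - i + j = (p - i + j - q) + q by omega, hpow, hm, map_zero]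
            rw [hzero, map_zero, smul_zero]
          · set d' := d - (p - i) with hd'
            have hd'lt : d' < d := by omega
            have hd'q : d' ≤ q := by omega
            have hqd' : q - d' = p - i + j := by omega
            have happ : (s ^ (k + i)) ((t ^ (q - d')) m) = 0 :=
              ih d' hd'lt hd'q (k + i) (by omega)
            rw [hqd', hpow] at happ
            rw [happ, smul_zero]
        rw [Finset.sum_eq_zero hz, zero_add] at key2
        rw [Nat.sub_self, pow_zero] at key2
        have key3 : (0 : M)
            = (Nat.choose p p * ∏ r ∈ range p, (k + r)) • ((s ^ n) ((t ^ j) m)) := by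
          rw [key2, hkp]
          rfl
        have hcpos : 0 < Nat.choose p p * ∏ r ∈ range p, (k + r) := by
          rw [Nat.choose_self, one_mul]
          exact Finset.prod_pos fun r _ => by omega
        have hQ : ((Nat.choose p p * ∏ r ∈ range p, (k + r) : ℕ) : ℚ) •
            ((s ^ n) ((t ^ j) m)) = 0 := by
          rw [Nat.cast_smul_eq_nsmul]
          exact key3.symm
        rcases smul_eq_zero.mp hQ with hc | hx
        · exact absurd hc (Nat.cast_ne_zero.mpr (Nat.pos_iff_ne_zero.mp hcpos))
        · exact hx
  have hfin := claim q le_rfl (p + q) le_rfl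
  rw [Nat.sub_self] at hfin
  simpa using hfin
end

section
/- Let M be a ℚ-vector space with additive endomorphisms t and s satisfying t∘s - s∘t = s∘s. If t^p M = 0 for some positive integer p, then s^(2p) M = 0. -/
/-!
From `t * s = s * t + s * s` one gets `t ^ p * s ^ n = s ^ n * (t + n • s) ^ p`, so for `n ≤ p`
the operator `s ^ p * (t + n • s) ^ p = s ^ (p - n) * t ^ p * s ^ n` kills `M`. Expanding
`(t + n • s) ^ p` in powers of `n`, the top coefficient is `s ^ p`, so `s ^ p * (t + n • s) ^ p m`
is a polynomial in `n` of degree `≤ p` with leading coefficient `s ^ (2 * p) m` that vanishes at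
`n = 0, …, p`. Its `p`-th forward difference is `p! • s ^ (2 * p) m = 0`, and `M` is torsion free.
-/

open Finset Polynomial fwdDiff
open scoped Nat

section Commutation

variable {R : Type*} [Semiring R] {t s : R}

theorem mul_pow_eq_pow_mul_add_nsmul (h : t * s = s * t + s * s) (n : ℕ) :
    t * s ^ n = s ^ n * (t + n • s) := by
  induction n with
  | zero => simp
  | succ n ih =>
    rw [pow_succ, ← mul_assoc, ih, mul_assoc, add_mul, smul_mul_assoc, h, mul_assoc, mul_add,
      mul_smul_comm, succ_nsmul]
    noncomm_ring

theorem pow_mul_pow_eq_pow_mul_add_nsmul_pow (h : t * s = s * t + s * s) (k n : ℕ) :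
    t ^ k * s ^ n = s ^ n * (t + n • s) ^ k := by
  induction k with
  | zero => simp
  | succ k ih =>
    rw [pow_succ, mul_assoc, mul_pow_eq_pow_mul_add_nsmul h, ← mul_assoc, ih, mul_assoc,
      ← pow_succ]

end Commutation

theorem exists_add_nsmul_pow_eq_sum {R : Type*} [Semiring R] (t s : R) (k : ℕ) :
    ∃ c : ℕ → R, c k = s ^ k ∧
      ∀ n : ℕ, (t + n • s) ^ k = ∑ i ∈ range (k + 1), n ^ i • c i := by
  set P : R[X] := (C s * X + C t) ^ k
  refine ⟨P.coeff, ?_, fun n ↦ ?_⟩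
  · simpa using coeff_pow_of_natDegree_le (m := k) (natDegree_linear_le (a := s) (b := t))
  · have hP : P.natDegree < k + 1 :=
      Nat.lt_succ_of_le (natDegree_pow_le_of_le k natDegree_linear_le |>.trans_eq (mul_one k))
    -- `n` is central, so evaluation at `n` is multiplicative although `R` need not be commutative
    let ev := eval₂RingHom' (RingHom.id R) (n : R) fun a ↦ (Nat.cast_commute n a).symm
    calc (t + n • s) ^ k
      _ = (ev (C s) * ev X + ev (C t)) ^ k := by simp [ev, add_comm, (Nat.cast_commute n s).eq]
      _ = ev P := by rw [← map_mul, ← map_add, ← map_pow]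
      _ = ∑ i ∈ range (k + 1), n ^ i • P.coeff i := by
        rw [eval₂RingHom'_apply, eval₂_eq_sum_range' _ hP]
        simp_rw [nsmul_eq_mul', Nat.cast_pow, RingHom.id_apply]

theorem fwdDiff_iter_smul_const {M R G : Type*} [AddCommMonoid M] [Ring R] [AddCommGroup G]
    [Module R G] (h : M) (f : M → R) (g : G) (n : ℕ) :
    Δ_[h] ^[n] (fun y ↦ f y • g) = fun y ↦ Δ_[h] ^[n] f y • g := by
  induction n generalizing f with
  | zero => rfl
  | succ n ih => exact (congrArg _ (fwdDiff_smul_const h f g)).trans (ih _)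

theorem fwdDiff_iter_sum_pow_smul {R G : Type*} [CommRing R] [AddCommGroup G] [Module R G]
    (c : ℕ → G) (N : ℕ) :
    Δ_[1] ^[N] (fun x : R ↦ ∑ i ∈ range (N + 1), x ^ i • c i) = fun _ ↦ (N ! : R) • c N := by
  rw [← sum_fn, fwdDiff_iter_finsetSum, sum_range_succ, sum_eq_zero fun i hi ↦ ?_, zero_add]
  · rw [fwdDiff_iter_smul_const, fwdDiff_iter_eq_factorial]
    rfl
  · rw [fwdDiff_iter_smul_const, fwdDiff_iter_pow_eq_zero_of_lt (mem_range.mp hi)]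
    exact funext fun _ ↦ zero_smul R _

theorem eq_zero_of_sum_pow_smul_eq_zero {G : Type*} [AddCommGroup G] [IsAddTorsionFree G]
    {c : ℕ → G} {N : ℕ} (h : ∀ n ≤ N, ∑ i ∈ range (N + 1), n ^ i • c i = 0) : c N = 0 := by
  have hfac : (N ! : ℤ) • c N = 0 := by
    rw [← congrFun (fwdDiff_iter_sum_pow_smul c N) 0, fwdDiff_iter_eq_sum_shift]
    refine sum_eq_zero fun k hk ↦ ?_
    simp_rw [zero_add, nsmul_one, ← Nat.cast_pow, natCast_zsmul,
      h k (Nat.lt_succ_iff.mp (mem_range.mp hk)), smul_zero]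
  exact (smul_eq_zero.mp hfac).resolve_left (by positivity)

theorem s_pow_two_p_annihilates_general (M : Type*) [AddCommGroup M] [Module ℚ M]
    (t s : AddMonoid.End M) (h : t * s - s * t = s * s)
    (p : ℕ) (htp : ∀ m : M, (t ^ p) m = 0) :
    ∀ m : M, (s ^ (2 * p)) m = 0 := by
  have : IsAddTorsionFree M := .of_module_rat M
  intro m
  obtain ⟨c, hc_top, hc⟩ := exists_add_nsmul_pow_eq_sum t s p
  have hvanish (n : ℕ) (hn : n ≤ p) : (s ^ p * (t + n • s) ^ p) m = 0 := by
    have hsplit : s ^ p = s ^ (p - n) * s ^ n := by rw [← pow_add, Nat.sub_add_cancel hn]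
    rw [hsplit, mul_assoc, ← pow_mul_pow_eq_pow_mul_add_nsmul_pow (sub_eq_iff_eq_add'.mp h)]
    exact (congrArg (s ^ (p - n)) (htp _)).trans (map_zero _)
  have htop := eq_zero_of_sum_pow_smul_eq_zero (c := fun i ↦ (s ^ p * c i) m) (N := p) fun n hn ↦ by
    rw [← hvanish n hn, hc n, mul_sum]
    refine Eq.trans ?_ (AddMonoidHom.finsetSum_apply _ _ _).symm
    simp only [mul_smul_comm]
    rfl
  rwa [hc_top, ← pow_add, ← two_mul] at htop

theorem s_pow_two_p_annihilates (M : Type*) [AddCommGroup M] [Module ℚ M]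
    (t s : AddMonoid.End M) (h : t * s - s * t = s * s)
    (p : ℕ) (hp : 0 < p) (htp : ∀ m : M, (t ^ p) m = 0) :
    ∀ m : M, (s ^ (2 * p)) m = 0 :=
  s_pow_two_p_annihilates_general M t s h p htp
end

section
/- In the ℚ-algebra R generated by two elements t and s subject to the single relation t*s - s*t = s^2 (e.g. the quotient of the free algebra ℚ⟨t,s⟩ by the two-sided ideal generated by ts - st - s^2), for every positive integer p the element s^(2p) belongs to the two-sided ideal generated by t^p. -/
/-- The relation `t*s = s*t + s^2` on the free algebra `ℚ⟨t,s⟩`, where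
`t` is the first generator and `s` the second. -/
inductive BrieskornRel : FreeAlgebra ℚ (Fin 2) → FreeAlgebra ℚ (Fin 2) → Prop
  | rel : BrieskornRel (FreeAlgebra.ι ℚ 0 * FreeAlgebra.ι ℚ 1)
      (FreeAlgebra.ι ℚ 1 * FreeAlgebra.ι ℚ 0 + FreeAlgebra.ι ℚ 1 ^ 2)

/-! The relation gives `t ^ m * s ^ k = s ^ k * (t + k * s) ^ m`, hence
`s ^ (p - k) * t ^ p * s ^ k = s ^ p * (t + k * s) ^ p` for `k ≤ p`. Since the integer `k` is central,
`k ↦ (t + k * s) ^ p` is a polynomial of degree `p` in `k` with leading coefficient `s ^ p`, even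
though `t` and `s` do not commute; so its `p`-th finite difference is `p! • s ^ p`. Thus
`p! • s ^ (2 * p)` is an alternating sum of the elements `s ^ (p - k) * t ^ p * s ^ k` of the ideal,
and `p!` is invertible over `ℚ`. -/

open Finset Polynomial
open scoped Nat

lemma sum_alternating_choose_smul_sum_pow_smul {G : Type*} [AddCommGroup G] (n : ℕ)
    (c : ℕ → G) :
    ∑ k ∈ range (n + 1), ((-1 : ℤ) ^ (n - k) * n.choose k) •
      ∑ i ∈ range (n + 1), (k : ℤ) ^ i • c i = n ! • c n := by
  have hΔ (i : ℕ) : ∑ k ∈ range (n + 1), (-1 : ℤ) ^ (n - k) * n.choose k * (k : ℤ) ^ i =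
      (fwdDiff 1)^[n] (fun r : ℤ ↦ r ^ i) 0 := by
    simp [fwdDiff_iter_eq_sum_shift]
  simp_rw [smul_sum, smul_smul]
  rw [sum_comm]
  simp_rw [← sum_smul, hΔ, sum_range_succ, fwdDiff_iter_eq_factorial]
  rw [sum_eq_zero fun i hi ↦ by rw [fwdDiff_iter_pow_eq_zero_of_lt (mem_range.mp hi)]; simp]
  simp

theorem sum_alternating_choose_smul_add_natCast_mul_pow {A : Type*} [Ring A] (a b : A)
    (n : ℕ) :
    ∑ k ∈ range (n + 1), ((-1 : ℤ) ^ (n - k) * n.choose k) • (a + k * b) ^ n = n ! • b ^ n := by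
  set P : A[X] := (C a + C b * X) ^ n
  have hlin : (C a + C b * X).natDegree ≤ 1 := by
    rw [add_comm]; exact natDegree_linear_le
  have hdeg : P.natDegree < n + 1 :=
    Nat.lt_succ_of_le (natDegree_pow_le.trans (by simpa using Nat.mul_le_mul_left n hlin))
  have htop : P.coeff n = b ^ n := by
    simpa using coeff_pow_of_natDegree_le (m := n) hlin
  have heval (k : ℕ) : (a + k * b) ^ n = ∑ i ∈ range (n + 1), (k : ℤ) ^ i • P.coeff i := by
    have hP : (a + k * b) ^ n = eval₂RingHom' (RingHom.id A) (k : A)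
        (fun x ↦ (Nat.cast_commute k x).symm) P := by
      simp only [P, map_pow, map_add, map_mul, eval₂RingHom'_apply, eval₂_C, eval₂_X,
        RingHom.id_apply, Nat.cast_comm]
    rw [hP, eval₂RingHom'_apply, ← eval, eval_eq_sum_range' hdeg]
    refine sum_congr rfl fun i _ ↦ ?_
    rw [zsmul_eq_mul']
    push_cast
    rfl
  simp_rw [heval, sum_alternating_choose_smul_sum_pow_smul, htop]

section

variable {A : Type*} [Ring A] {t s : A}

lemma mul_pow_eq_pow_mul_add_of_mul_eq (h : t * s = s * t + s ^ 2) (k : ℕ) :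
    t * s ^ k = s ^ k * (t + k * s) := by
  induction k with
  | zero => simp
  | succ k ih =>
    calc t * s ^ (k + 1) = s ^ k * (t * s + k * s * s) := by
          rw [pow_succ, ← mul_assoc, ih, mul_assoc, add_mul]
      _ = s ^ (k + 1) * (t + (k + 1 : ℕ) * s) := by
          rw [h, pow_succ s k, Nat.cast_succ, Nat.cast_comm, mul_assoc]
          noncomm_ring

lemma pow_mul_pow_eq_pow_mul_add_pow_of_mul_eq (h : t * s = s * t + s ^ 2) (m k : ℕ) :
    t ^ m * s ^ k = s ^ k * (t + k * s) ^ m := by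
  induction m with
  | zero => simp
  | succ m ih =>
    rw [pow_succ', mul_assoc, ih, ← mul_assoc, mul_pow_eq_pow_mul_add_of_mul_eq h, mul_assoc,
      ← pow_succ']

lemma factorial_smul_pow_two_mul_mem_span_pow_of_mul_eq (h : t * s = s * t + s ^ 2) (n : ℕ) :
    n ! • s ^ (2 * n) ∈ TwoSidedIdeal.span {t ^ n} := by
  set I := TwoSidedIdeal.span {t ^ n}
  have hsum : n ! • s ^ (2 * n) = ∑ k ∈ range (n + 1),
      ((-1 : ℤ) ^ (n - k) * n.choose k) • (s ^ (n - k) * t ^ n * s ^ k) := by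
    calc n ! • s ^ (2 * n)
        = s ^ n * (n ! • s ^ n) := by rw [mul_smul_comm, ← pow_add, two_mul]
      _ = s ^ n * ∑ k ∈ range (n + 1), ((-1 : ℤ) ^ (n - k) * n.choose k) • (t + k * s) ^ n := by
        rw [sum_alternating_choose_smul_add_natCast_mul_pow]
      _ = _ := by
        rw [mul_sum]
        refine sum_congr rfl fun k hk ↦ ?_
        rw [mul_smul_comm, mul_assoc, pow_mul_pow_eq_pow_mul_add_pow_of_mul_eq h, ← mul_assoc,
          ← pow_add, Nat.sub_add_cancel (Nat.lt_succ_iff.mp (mem_range.mp hk))]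
  rw [hsum]
  exact sum_mem fun k _ ↦ zsmul_mem
    (I.mul_mem_right _ _ (I.mul_mem_left _ _ (TwoSidedIdeal.subset_span rfl))) _

theorem pow_two_mul_mem_span_pow_of_mul_eq [Algebra ℚ A] (h : t * s = s * t + s ^ 2) (n : ℕ) :
    s ^ (2 * n) ∈ TwoSidedIdeal.span {t ^ n} := by
  have hfac : (n ! : ℚ) ≠ 0 := by exact_mod_cast n.factorial_ne_zero
  rw [← inv_smul_smul₀ hfac (s ^ (2 * n)), Nat.cast_smul_eq_nsmul, Algebra.smul_def]
  exact TwoSidedIdeal.mul_mem_left _ _ _ (factorial_smul_pow_two_mul_mem_span_pow_of_mul_eq h n)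

end

theorem s_pow_mem_ideal_t_pow_general (p : ℕ) :
    (RingQuot.mkAlgHom ℚ BrieskornRel (FreeAlgebra.ι ℚ 1)) ^ (2 * p) ∈
      TwoSidedIdeal.span {(RingQuot.mkAlgHom ℚ BrieskornRel (FreeAlgebra.ι ℚ 0)) ^ p} :=
  pow_two_mul_mem_span_pow_of_mul_eq
    (by simpa using RingQuot.mkAlgHom_rel ℚ BrieskornRel.rel) p

/-- In `R = ℚ⟨t,s⟩/(ts - st - s²)`, the element `s^(2p)` lies in the two-sided
ideal generated by `t^p`, for every positive integer `p`. -/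
theorem s_pow_mem_ideal_t_pow (p : ℕ) (hp : 0 < p) :
    (RingQuot.mkAlgHom ℚ BrieskornRel (FreeAlgebra.ι ℚ 1)) ^ (2 * p) ∈
      TwoSidedIdeal.span {(RingQuot.mkAlgHom ℚ BrieskornRel (FreeAlgebra.ι ℚ 0)) ^ p} :=
  s_pow_mem_ideal_t_pow_general p
end
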